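/- Let p be a prime integer and M = ℤ ⊕ ℤ(p^∞) as a ℤ-module. Then for every prime integer q, the submodule qM = qℤ ⊕ ℤ(p^∞) is a prime submodule of M with (qM :_ℤ M) = (q), and the torsion submodule T(M) = 0 ⊕ ℤ(p^∞) is a prime submodule with (T(M) :_ℤ M) = (0). -/

import Mathlib

/-! Both submodules have the form `I × ℤ(p^∞)` with `I` a prime ideal of `ℤ`, and for any
module `D` the submodule `I × D` of `R × D` is prime with colon ideal `I`, since
`r • (a, x) ∈ I × D ↔ r * a ∈ I`. That `q(ℤ ⊕ ℤ(p^∞)) = qℤ ⊕ ℤ(p^∞)` is the `q`-divisibility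
of `ℤ(p^∞)`: for `q ∤ p` invert `q` modulo the order `p^n` of an element, and for `q ~ p`
divide by `p` in `ℚ/ℤ`. -/

open Submodule

variable {R : Type*} [CommRing R] {M : Type*} [AddCommGroup M] [Module R M]

/-- A submodule `N` of `M` is *prime* if `N ≠ M` and whenever `r • m ∈ N`,
either `r ∈ (N :ᵣ M)` or `m ∈ N`. Here `(N :ᵣ M)` is `N.colon ⊤`. -/
def IsPrimeSubmodule (N : Submodule R M) : Prop :=
  N ≠ ⊤ ∧ ∀ (r : R) (m : M), r • m ∈ N → r ∈ N.colon ⊤ ∨ m ∈ N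

/-- The prime spectrum of the module `M`: the set of prime submodules. -/
def MSpec (R M : Type*) [CommRing R] [AddCommGroup M] [Module R M] :=
  {P : Submodule R M // IsPrimeSubmodule P}

/-- `V(N) = {P ∈ Spec(M) | (N : M) ⊆ (P : M)}`. -/
def VV (N : Submodule R M) : Set (MSpec R M) :=
  {P | N.colon ⊤ ≤ P.1.colon ⊤}

/-- The basic open set `X_r = Spec(M) \ V(rM)`. -/
def Xb (r : R) : Set (MSpec R M) :=
  (VV (Ideal.span {r} • (⊤ : Submodule R M)))ᶜ


/-- The Prüfer `p`-group `ℤ(p^∞)`, realized as the `p`-primary torsion submodule of the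
`ℤ`-module `ℚ/ℤ`. -/
def PruferModule (p : ℕ) : Submodule ℤ (ℚ ⧸ Submodule.span ℤ {(1 : ℚ)}) where
  carrier := {x | ∃ n : ℕ, (p : ℤ) ^ n • x = 0}
  add_mem' := by
    rintro a b ⟨n, hn⟩ ⟨m, hm⟩
    refine ⟨n + m, ?_⟩
    have h1 : ((p : ℤ) ^ (n + m)) • a = 0 := by
      rw [pow_add, mul_comm, mul_smul, hn, smul_zero]
    have h2 : ((p : ℤ) ^ (n + m)) • b = 0 := by
      rw [pow_add, mul_smul, hm, smul_zero]
    rw [smul_add, h1, h2, add_zero]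
  zero_mem' := ⟨0, smul_zero _⟩
  smul_mem' := by
    rintro c x ⟨n, hn⟩
    exact ⟨n, by rw [smul_comm, hn, smul_zero]⟩

section

variable {N : Type*} [AddCommGroup N] [Module R N]

theorem Submodule.ideal_smul_top_prod (I : Ideal R) :
    I • (⊤ : Submodule R (M × N)) = (I • ⊤ : Submodule R M).prod (I • ⊤ : Submodule R N) := by
  refine le_antisymm
    (smul_le.mpr fun r hr x _ => ⟨smul_mem_smul hr trivial, smul_mem_smul hr trivial⟩) ?_
  rintro ⟨m, n⟩ ⟨hm, hn⟩
  have hinl : LinearMap.inl R M N m ∈ I • (⊤ : Submodule R (M × N)) :=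
    smul_mono_right I (le_top : map (LinearMap.inl R M N) ⊤ ≤ ⊤) <| by
      rw [← map_smul'']; exact mem_map_of_mem hm
  have hinr : LinearMap.inr R M N n ∈ I • (⊤ : Submodule R (M × N)) :=
    smul_mono_right I (le_top : map (LinearMap.inr R M N) ⊤ ≤ ⊤) <| by
      rw [← map_smul'']; exact mem_map_of_mem hn
  simpa using add_mem hinl hinr

theorem Ideal.span_singleton_smul_top_eq_top {r : R} (h : Function.Surjective (r • · : N → N)) :
    Ideal.span {r} • (⊤ : Submodule R N) = ⊤ := by
  refine eq_top_iff.mpr fun x _ => ?_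
  obtain ⟨y, rfl⟩ := h x
  exact smul_mem_smul (mem_span_singleton_self r) trivial

theorem Submodule.torsion_prod :
    torsion R (M × N) = (torsion R M).prod (torsion R N) := by
  ext ⟨m, n⟩
  constructor
  · rintro ⟨a, ha⟩
    exact ⟨⟨a, congrArg Prod.fst ha⟩, ⟨a, congrArg Prod.snd ha⟩⟩
  · rintro ⟨⟨a, ha : a • m = 0⟩, ⟨b, hb : b • n = 0⟩⟩
    refine ⟨a * b, Prod.ext ?_ ?_⟩
    · rw [Prod.smul_fst, mul_comm, mul_smul, ha, smul_zero]; rfl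
    · rw [Prod.smul_snd, mul_smul, hb, smul_zero]; rfl

theorem colon_prod_top (I : Ideal R) : (Submodule.prod I (⊤ : Submodule R N)).colon ⊤ = I := by
  ext r
  refine ⟨fun h => by simpa using (mem_colon.mp h (1, 0) trivial).1, fun hr => ?_⟩
  exact mem_colon.mpr fun x _ => ⟨I.mul_mem_right x.1 hr, trivial⟩

theorem isPrimeSubmodule_prod_top {I : Ideal R} (hI : I.IsPrime) :
    IsPrimeSubmodule (Submodule.prod I (⊤ : Submodule R N)) := by
  refine ⟨fun h => hI.ne_top (by simpa [← colon_prod_top I] using congrArg (colon · ⊤) h), ?_⟩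
  rintro r ⟨a, x⟩ ⟨hra, -⟩
  rw [colon_prod_top]
  exact (hI.mem_or_mem hra).imp_right fun ha => ⟨ha, trivial⟩

end

theorem exists_smul_eq_of_isCoprime {a b : R} (h : IsCoprime a b) {x : M} (hx : b • x = 0) :
    ∃ y, a • y = x := by
  obtain ⟨u, v, huv⟩ := h
  refine ⟨u • x, ?_⟩
  calc a • u • x = (1 - v * b) • x := by rw [smul_smul, mul_comm, ← huv, add_sub_cancel_right]
    _ = x := by rw [sub_smul, one_smul, mul_smul, hx, smul_zero, sub_zero]

namespace PruferModule

variable {p : ℕ}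

theorem exists_natCast_smul_eq (hp : p ≠ 0) (x : PruferModule p) : ∃ y, (p : ℤ) • y = x := by
  obtain ⟨n, hn⟩ := x.2
  obtain ⟨a, ha⟩ := Submodule.Quotient.mk_surjective _ x.1
  have hpa : (p : ℤ) • (a / p) = a := by
    rw [zsmul_eq_mul]; push_cast; field_simp
  refine ⟨⟨Submodule.Quotient.mk (a / p), n + 1, ?_⟩, Subtype.ext ?_⟩
  · rw [← Submodule.Quotient.mk_smul, pow_succ, mul_smul, hpa, Submodule.Quotient.mk_smul, ha, hn]
  · simp only [SetLike.val_smul, ← Submodule.Quotient.mk_smul, hpa, ha]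

theorem exists_smul_eq (hp : p.Prime) {q : ℤ} (hq : Prime q) (x : PruferModule p) :
    ∃ y, q • y = x := by
  by_cases hqp : q ∣ p
  · obtain ⟨u, hu⟩ := (hq.dvd_prime_iff_associated (Nat.prime_iff_prime_int.mp hp)).mp hqp
    obtain ⟨y, hy⟩ := exists_natCast_smul_eq hp.ne_zero x
    exact ⟨(u : ℤ) • y, by rw [smul_smul, hu, hy]⟩
  · obtain ⟨n, hn⟩ := x.2
    exact exists_smul_eq_of_isCoprime ((hq.coprime_iff_not_dvd.mpr hqp).pow_right) (Subtype.ext hn)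

theorem torsion_eq_top (hp : p ≠ 0) : torsion ℤ (PruferModule p) = ⊤ :=
  eq_top_iff.mpr fun x _ =>
    let ⟨n, hn⟩ := x.2
    ⟨⟨_, mem_nonZeroDivisors_of_ne_zero (pow_ne_zero n (Int.natCast_ne_zero.mpr hp))⟩,
      Subtype.ext hn⟩

end PruferModule

/-- For `M = ℤ ⊕ ℤ(p^∞)`: for every prime integer `q`, `qM = qℤ ⊕ ℤ(p^∞)` is a prime
submodule with `(qM : M) = (q)`, and the torsion submodule `T(M) = 0 ⊕ ℤ(p^∞)` is a prime
submodule with `(T(M) : M) = (0)`. -/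
theorem spec_int_prod_prufer (p : ℕ) (hp : p.Prime) :
    (∀ q : ℤ, Prime q →
      IsPrimeSubmodule (Ideal.span {q} • (⊤ : Submodule ℤ (ℤ × PruferModule p))) ∧
      (Ideal.span {q} • (⊤ : Submodule ℤ (ℤ × PruferModule p))).colon ⊤ = Ideal.span {q} ∧
      Ideal.span {q} • (⊤ : Submodule ℤ (ℤ × PruferModule p)) =
        (Ideal.span {q} • (⊤ : Submodule ℤ ℤ)).prod (⊤ : Submodule ℤ (PruferModule p))) ∧
    Submodule.torsion ℤ (ℤ × PruferModule p) =
      (⊥ : Submodule ℤ ℤ).prod (⊤ : Submodule ℤ (PruferModule p)) ∧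
    IsPrimeSubmodule ((⊥ : Submodule ℤ ℤ).prod (⊤ : Submodule ℤ (PruferModule p))) ∧
    ((⊥ : Submodule ℤ ℤ).prod (⊤ : Submodule ℤ (PruferModule p))).colon ⊤ = ⊥ := by
  have smul_top_self (I : Ideal ℤ) : I • (⊤ : Submodule ℤ ℤ) = I := by
    rw [Ideal.smul_eq_mul, Ideal.mul_top]
  refine ⟨fun q hq => ?_, ?_, isPrimeSubmodule_prod_top Ideal.isPrime_bot, colon_prod_top ⊥⟩
  · have hqM : Ideal.span {q} • (⊤ : Submodule ℤ (ℤ × PruferModule p)) =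
        Submodule.prod (Ideal.span {q}) ⊤ := by
      rw [ideal_smul_top_prod, smul_top_self,
        Ideal.span_singleton_smul_top_eq_top (PruferModule.exists_smul_eq hp hq)]
    rw [hqM, smul_top_self]
    exact ⟨isPrimeSubmodule_prod_top ((Ideal.span_singleton_prime hq.ne_zero).mpr hq),
      colon_prod_top _, rfl⟩
  · rw [torsion_prod, isTorsionFree_iff_torsion_eq_bot.mp inferInstance,
      PruferModule.torsion_eq_top hp.ne_zero]
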